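/- arXiv:1205.5855 — 5 statements merged into one kernel-verified Lean document; each statement's English description precedes it below -/
import Mathlib

section
/- The functor O is monomorphic: if A is a closed subspace of a compact Hausdorff space X and i : A → X the inclusion, then the induced map O(i) : O(A) → O(X), ν ↦ (φ ↦ ν(φ|_A)), is a topological embedding (injective and a homeomorphism onto its image). -/
lemma precomp_isEmbedding {α β γ : Type*} [TopologicalSpace γ] {r : α → β}
    (hr : Function.Surjective r) :
    Topology.IsEmbedding (fun f : β → γ => f ∘ r) := by
  refine ⟨⟨?_⟩, ?_⟩
  · show Pi.topologicalSpace = _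
    rw [Pi.topologicalSpace, Pi.topologicalSpace, induced_iInf]
    simp only [induced_compose]
    exact (hr.iInf_comp fun b => TopologicalSpace.induced (fun f : β → γ => f b) ‹_›).symm
  · intro f g h
    funext b
    obtain ⟨a, rfl⟩ := hr b
    exact congrFun h a

/-- For a closed subset `A` of a compact Hausdorff space `X`, the induced map
`O(i) : O(A) → ℝ^{C(X)}`, `ν ↦ (φ ↦ ν (φ|_A))`, is a topological embedding;
hence `O(A)` embeds in `O(X)`. -/
theorem stmt5 {X : Type*} [TopologicalSpace X] [CompactSpace X] [T2Space X]
    (A : Set X) (hA : IsClosed A) :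
    Topology.IsEmbedding (fun ν : {ν : C(A, ℝ) → ℝ //
        (∀ φ ψ : C(A, ℝ), φ ≤ ψ → ν φ ≤ ν ψ) ∧
        (∀ (φ : C(A, ℝ)) (c : ℝ), ν (φ + ContinuousMap.const A c) = ν φ + c * ν 1) ∧
        ν 1 = 1} =>
      (fun φ : C(X, ℝ) => ν.1 (φ.restrict A))) := by
  have hr : Function.Surjective (fun φ : C(X, ℝ) => φ.restrict A) := fun ψ => by
    obtain ⟨g, hg⟩ := ψ.exists_restrict_eq hA
    exact ⟨g, hg⟩
  exact (precomp_isEmbedding hr).comp Topology.IsEmbedding.subtypeVal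
end

section
/- For a compact Hausdorff space X, an open set U ⊆ X and ε > 0, the set ⟨U; −ε⟩ = {μ ∈ O(X) : μ(−χ_U) < −ε} is open in O(X) with the pointwise convergence topology, where μ(−χ_U) := inf{μ(φ) : φ ∈ C(X), φ ≥ −χ_U}. -/
/-- For an open `U ⊆ X` and `ε > 0`, the set `⟨U; −ε⟩ = {μ ∈ O(X) : μ(−χ_U) < −ε}` is open
in the pointwise convergence topology, where
`μ(−χ_U) = inf {μ φ : φ ∈ C(X), φ ≥ −χ_U}`. -/
theorem stmt7 {X : Type*} [TopologicalSpace X] [CompactSpace X] [T2Space X]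
    (U : Set X) (hU : IsOpen U) (ε : ℝ) (hε : 0 < ε) :
    IsOpen {μ : {μ : C(X, ℝ) → ℝ //
        (∀ φ ψ : C(X, ℝ), φ ≤ ψ → μ φ ≤ μ ψ) ∧
        (∀ (φ : C(X, ℝ)) (c : ℝ), μ (φ + ContinuousMap.const X c) = μ φ + c * μ 1) ∧
        μ 1 = 1} |
      sInf (μ.1 '' {φ : C(X, ℝ) | ∀ x, -(U.indicator 1 x) ≤ φ x}) < -ε} := by
  have hset : {μ : {μ : C(X, ℝ) → ℝ //
        (∀ φ ψ : C(X, ℝ), φ ≤ ψ → μ φ ≤ μ ψ) ∧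
        (∀ (φ : C(X, ℝ)) (c : ℝ), μ (φ + ContinuousMap.const X c) = μ φ + c * μ 1) ∧
        μ 1 = 1} |
      sInf (μ.1 '' {φ : C(X, ℝ) | ∀ x, -(U.indicator 1 x) ≤ φ x}) < -ε}
      = ⋃ (φ : C(X, ℝ)) (_ : ∀ x, -(U.indicator 1 x) ≤ φ x),
          {μ : {μ : C(X, ℝ) → ℝ //
            (∀ φ ψ : C(X, ℝ), φ ≤ ψ → μ φ ≤ μ ψ) ∧
            (∀ (φ : C(X, ℝ)) (c : ℝ), μ (φ + ContinuousMap.const X c) = μ φ + c * μ 1) ∧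
            μ 1 = 1} | μ.1 φ < -ε} := by
    ext μ
    obtain ⟨f, hmono, hadd, hone⟩ := μ
    have hzero : f 0 = 0 := by
      have h1 : (1 : C(X, ℝ)) + ContinuousMap.const X (-1) = 0 := by
        ext x; simp
      have := hadd 1 (-1)
      rw [h1, hone] at this
      linarith
    have hneg1 : f (ContinuousMap.const X (-1)) = -1 := by
      have h0 : (0 : C(X, ℝ)) + ContinuousMap.const X (-1) = ContinuousMap.const X (-1) := by
        ext x; simp
      have := hadd 0 (-1)
      rw [h0, hzero, hone] at this
      linarith
    have hne : (f '' {φ : C(X, ℝ) | ∀ x, -(U.indicator 1 x) ≤ φ x}).Nonempty := by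
      refine ⟨f 0, Set.mem_image_of_mem f ?_⟩
      intro x
      simp only [ContinuousMap.zero_apply, neg_nonpos]
      exact Set.indicator_nonneg (fun _ _ => zero_le_one) x
    have hbdd : BddBelow (f '' {φ : C(X, ℝ) | ∀ x, -(U.indicator 1 x) ≤ φ x}) := by
      refine ⟨-1, ?_⟩
      rintro y ⟨φ, hφ, rfl⟩
      rw [← hneg1]
      apply hmono
      intro x
      show (-1 : ℝ) ≤ φ x
      refine le_trans ?_ (hφ x)
      have : U.indicator (1 : X → ℝ) x ≤ 1 :=
        Set.indicator_le_self' (fun _ _ => zero_le_one) x |>.trans (by by_cases h : x ∈ U <;> simp [h])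
      linarith
    simp only [Set.mem_setOf_eq, Set.mem_iUnion]
    rw [csInf_lt_iff hbdd hne]
    constructor
    · rintro ⟨y, ⟨φ, hφ, rfl⟩, hy⟩
      exact ⟨φ, hφ, hy⟩
    · rintro ⟨φ, hφ, hy⟩
      exact ⟨f φ, Set.mem_image_of_mem f hφ, hy⟩
  rw [hset]
  apply isOpen_iUnion
  intro φ
  apply isOpen_iUnion
  intro _
  exact isOpen_lt ((continuous_apply φ).comp continuous_subtype_val) continuous_const
end

section
/- Let X be compact Hausdorff, μ ∈ O(X), and for a closed set F ⊆ X and α ≥ 0 define μ(α·χ_F) = inf{μ(φ) : φ ∈ C(X), φ ≥ α·χ_F}. Then for any decreasing sequence (or net) of closed sets Z_α with intersection K, the net μ(χ_{Z_α}) is decreasing and converges to μ(χ_K), provided μ is τ-smooth in the sense that μ(ψ_α) → 0 for every monotone decreasing net ψ_α ↓ 0 of continuous functions. -/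
open Filter Topology

/-- The extension of a functional `μ` to the indicator of a closed set `F`:
`μ(χ_F) = inf {μ φ : φ ∈ C(X), φ ≥ χ_F}`. -/
noncomputable def indicatorValInf {X : Type*} [TopologicalSpace X]
    (μ : C(X, ℝ) → ℝ) (F : Set X) : ℝ :=
  sInf (μ '' {φ : C(X, ℝ) | ∀ x, F.indicator 1 x ≤ φ x})

/-- For a τ-smooth order-preserving, weakly additive, normed functional `μ` on a compact
Hausdorff space and a decreasing net of closed sets `Z_α` with intersection `K`, the net
`μ(χ_{Z_α})` is decreasing and converges to `μ(χ_K)`. -/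
theorem stmt8 {X : Type*} [TopologicalSpace X] [CompactSpace X] [T2Space X]
    (μ : C(X, ℝ) → ℝ)
    (hop : ∀ φ ψ : C(X, ℝ), φ ≤ ψ → μ φ ≤ μ ψ)
    (hwa : ∀ (φ : C(X, ℝ)) (c : ℝ), μ (φ + ContinuousMap.const X c) = μ φ + c * μ 1)
    (hn : μ 1 = 1)
    (hτ : ∀ (ι' : Type) [SemilatticeSup ι'] [Nonempty ι'] (ψ : ι' → C(X, ℝ)),
      Antitone ψ → (∀ x : X, Tendsto (fun a => ψ a x) atTop (𝓝 0)) →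
      Tendsto (fun a => μ (ψ a)) atTop (𝓝 0))
    {ι : Type*} [SemilatticeSup ι] [Nonempty ι]
    (Z : ι → Set X) (hZcl : ∀ a, IsClosed (Z a)) (hZanti : Antitone Z) :
    Antitone (fun a => indicatorValInf μ (Z a)) ∧
    Tendsto (fun a => indicatorValInf μ (Z a)) atTop
      (𝓝 (indicatorValInf μ (⋂ a, Z a))) := by
  have hμ0 : μ 0 = 0 := by
    have h := hwa 0 1
    have h2 : (0 : C(X, ℝ)) + ContinuousMap.const X 1 = 1 := by ext x; simp
    rw [h2, hn] at h
    linarith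
  -- nonemptiness of the defining sets
  have hne : ∀ F : Set X, ({φ : C(X, ℝ) | ∀ x, F.indicator 1 x ≤ φ x}).Nonempty := by
    intro F
    refine ⟨1, fun x => ?_⟩
    by_cases hx : x ∈ F
    · simp [Set.indicator_of_mem hx]
    · simp [Set.indicator_of_notMem hx]
  -- boundedness below by 0
  have hbdd : ∀ F : Set X, BddBelow (μ '' {φ : C(X, ℝ) | ∀ x, F.indicator 1 x ≤ φ x}) := by
    intro F
    refine ⟨0, ?_⟩
    rintro y ⟨φ, hφ, rfl⟩
    have h0 : (0 : C(X, ℝ)) ≤ φ := by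
      intro x
      have := hφ x
      by_cases hx : x ∈ F
      · simp [Set.indicator_of_mem hx] at this ⊢; linarith
      · simpa [Set.indicator_of_notMem hx] using this
    have := hop 0 φ h0
    rw [hμ0] at this
    exact this
  -- monotonicity
  have hmono : ∀ F G : Set X, F ⊆ G → indicatorValInf μ F ≤ indicatorValInf μ G := by
    intro F G hFG
    apply csInf_le_csInf (hbdd F) ((hne G).image μ)
    apply Set.image_mono
    intro φ hφ x
    refine le_trans ?_ (hφ x)
    exact Set.indicator_le_indicator_of_subset hFG (fun _ => zero_le_one) x
  set K := ⋂ a, Z a with hK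
  set v := fun a => indicatorValInf μ (Z a) with hv
  have hanti : Antitone v := fun a b hab => hmono (Z b) (Z a) (hZanti hab)
  refine ⟨hanti, ?_⟩
  have hL : ∀ a, indicatorValInf μ K ≤ v a := fun a =>
    hmono K (Z a) (Set.iInter_subset Z a)
  have hbd : BddBelow (Set.range v) := ⟨indicatorValInf μ K, by rintro y ⟨a, rfl⟩; exact hL a⟩
  have htend : Tendsto v atTop (𝓝 (⨅ a, v a)) := tendsto_atTop_ciInf hanti hbd
  have hinf : (⨅ a, v a) = indicatorValInf μ K := by
    refine le_antisymm ?_ (le_ciInf hL)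
    apply le_of_forall_pos_le_add
    intro ε hε
    have hε2 : (0 : ℝ) < ε / 2 := by linarith
    obtain ⟨y, hy, hylt⟩ := Real.lt_sInf_add_pos ((hne K).image μ) hε2
    obtain ⟨φ, hφ, rfl⟩ := hy
    set U := {x | 1 - ε / 2 < φ x} with hU
    have hUopen : IsOpen U := isOpen_lt continuous_const φ.continuous
    have hKU : K ⊆ U := by
      intro x hx
      have := hφ x
      simp only [Set.indicator_of_mem hx, Pi.one_apply] at this
      simp only [hU, Set.mem_setOf_eq]
      linarith
    -- find a with Z a ⊆ U using compactness
    have hZU : ∃ a, Z a ⊆ U := by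
      have hdir : Directed (· ⊇ ·) (fun a => Z a ∩ Uᶜ) := by
        intro a b
        exact ⟨a ⊔ b,
          Set.inter_subset_inter_left _ (hZanti le_sup_left),
          Set.inter_subset_inter_left _ (hZanti le_sup_right)⟩
      have hempty : (Set.univ ∩ ⋂ a, Z a ∩ Uᶜ) = ∅ := by
        rw [Set.univ_inter]
        rw [← Set.iInter_inter]
        rw [← hK]
        rw [Set.eq_empty_iff_forall_notMem]
        rintro x ⟨hx1, hx2⟩
        exact hx2 (hKU hx1)
      obtain ⟨a, ha⟩ := isCompact_univ.elim_directed_family_closed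
        (fun a => Z a ∩ Uᶜ) (fun a => (hZcl a).inter hUopen.isClosed_compl) hempty hdir
      refine ⟨a, fun x hx => ?_⟩
      by_contra hxU
      rw [Set.eq_empty_iff_forall_notMem] at ha
      exact ha x ⟨Set.mem_univ x, hx, hxU⟩
    obtain ⟨a, ha⟩ := hZU
    -- ψ = φ + ε/2 dominates χ_{Z a}
    have hψ : ∀ x, (Z a).indicator 1 x ≤ (φ + ContinuousMap.const X (ε / 2)) x := by
      intro x
      simp only [ContinuousMap.add_apply, ContinuousMap.const_apply]
      by_cases hx : x ∈ Z a
      · have : 1 - ε / 2 < φ x := ha hx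
        simp only [Set.indicator_of_mem hx, Pi.one_apply]
        linarith
      · have h0 : (0 : ℝ) ≤ φ x := by
          have := hφ x
          by_cases hxK : x ∈ K
          · simp only [Set.indicator_of_mem hxK, Pi.one_apply] at this; linarith
          · simpa [Set.indicator_of_notMem hxK] using this
        simp only [Set.indicator_of_notMem hx]
        linarith
    have hva : v a ≤ μ φ + ε / 2 := by
      have := csInf_le (hbdd (Z a)) (Set.mem_image_of_mem μ hψ)
      rwa [hwa, hn, mul_one] at this
    calc (⨅ b, v b) ≤ v a := ciInf_le hbd a
      _ ≤ μ φ + ε / 2 := hva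
      _ ≤ indicatorValInf μ K + ε := by
          have : μ φ < indicatorValInf μ K + ε / 2 := hylt
          linarith
  rwa [hinf] at htend
end

section
/- Let X be a Tychonoff space with Stone–Čech compactification βX, and let μ ∈ O(βX) satisfy μ(λ·χ_K) = 0 for every compact K ⊆ βX \ X and every λ ∈ ℝ (extended via inf/sup over continuous functions as usual). Then μ is τ-smooth: for every monotone net {φ_α} ⊆ C(βX) decreasing pointwise to 0 on X, one has μ(φ_α) → 0 and μ(−φ_α) → 0. -/
open Filter Topology

/-- The extension of a functional `μ` on `C(βX)` to functions `λ·χ_K` (`K` closed). -/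
noncomputable def extVal {Z : Type*} [TopologicalSpace Z]
    (μ : C(Z, ℝ) → ℝ) (l : ℝ) (K : Set Z) : ℝ :=
  if 0 ≤ l then sInf (μ '' {φ : C(Z, ℝ) | ∀ y, l * K.indicator 1 y ≤ φ y})
  else sSup (μ '' {φ : C(Z, ℝ) | ∀ y, φ y ≤ l * K.indicator 1 y})

lemma neg_image_eq {α : Type*} (g : α → ℝ) (s : Set α) :
    (fun a => -g a) '' s = -(g '' s) := by
  ext r
  simp only [Set.mem_image, Set.mem_neg]
  constructor
  · rintro ⟨a, ha, rfl⟩; exact ⟨a, ha, by ring⟩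
  · rintro ⟨a, ha, h⟩; exact ⟨a, ha, by linarith⟩

lemma sInf_neg_image {α : Type*} (g : α → ℝ) (s : Set α) :
    sInf ((fun a => -g a) '' s) = -sSup (g '' s) := by
  rw [neg_image_eq, Real.sInf_def, neg_neg]

lemma sSup_neg_image {α : Type*} (g : α → ℝ) (s : Set α) :
    sSup ((fun a => -g a) '' s) = -sInf (g '' s) := by
  rw [neg_image_eq, Real.sInf_def, neg_neg]

/-- The key half of the theorem: `μ(φ_α) → 0`. -/
theorem aux_smooth {X : Type*} [TopologicalSpace X] [T35Space X]
    (μ : C(StoneCech X, ℝ) → ℝ)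
    (hop : ∀ φ ψ : C(StoneCech X, ℝ), φ ≤ ψ → μ φ ≤ μ ψ)
    (hwa : ∀ (φ : C(StoneCech X, ℝ)) (c : ℝ),
      μ (φ + ContinuousMap.const (StoneCech X) c) = μ φ + c * μ 1)
    (hn : μ 1 = 1)
    (hK : ∀ K : Set (StoneCech X), IsCompact K →
      Disjoint K (Set.range (stoneCechUnit : X → StoneCech X)) →
      ∀ l : ℝ, extVal μ l K = 0)
    (ι : Type) [SemilatticeSup ι] [Nonempty ι] (φ : ι → C(StoneCech X, ℝ))
    (hant : Antitone φ)
    (hconv : ∀ x : X, Tendsto (fun a => φ a (stoneCechUnit x)) atTop (𝓝 0)) :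
    Tendsto (fun a => μ (φ a)) atTop (𝓝 0) := by
  have h0 : μ 0 = 0 := by
    have h := hwa 1 (-1)
    have he : (1 : C(StoneCech X, ℝ)) + ContinuousMap.const _ (-1) = 0 := by
      ext y; simp
    rw [he, hn] at h
    linarith
  -- nonnegativity of every φ a everywhere
  have hposX : ∀ (a : ι) (x : X), 0 ≤ φ a (stoneCechUnit x) := by
    intro a x
    refine le_of_tendsto (hconv x) ?_
    filter_upwards [eventually_ge_atTop a] with b hb
    exact ContinuousMap.le_def.mp (hant hb) (stoneCechUnit x)
  have hpos : ∀ (a : ι) (y : StoneCech X), 0 ≤ φ a y := by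
    intro a
    have hcl : IsClosed {y : StoneCech X | 0 ≤ φ a y} :=
      isClosed_le continuous_const (φ a).continuous
    have hsub : Set.range (stoneCechUnit : X → StoneCech X) ⊆ {y | 0 ≤ φ a y} := by
      rintro _ ⟨x, rfl⟩; exact hposX a x
    intro y
    have hy : y ∈ closure (Set.range (stoneCechUnit : X → StoneCech X)) :=
      denseRange_stoneCechUnit y
    have h2 := closure_mono hsub
    rw [hcl.closure_eq] at h2
    exact h2 hy
  have hmono : ∀ {a b : ι}, a ≤ b → μ (φ b) ≤ μ (φ a) := fun hab => hop _ _ (hant hab)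
  have hnonneg : ∀ a, 0 ≤ μ (φ a) := by
    intro a
    have h1 : (0 : C(StoneCech X, ℝ)) ≤ φ a :=
      ContinuousMap.le_def.mpr fun y => by simpa using hpos a y
    have : μ 0 ≤ μ (φ a) := hop _ _ h1
    linarith
  rw [Metric.tendsto_atTop]
  intro ε hε
  obtain ⟨a0⟩ := ‹Nonempty ι›
  set ε' := ε / 2 with hε'def
  have hε'pos : 0 < ε' := by positivity
  set M := ‖φ a0‖ with hMdef
  set l := M + 1 with hldef
  have hl0 : (0:ℝ) ≤ l := by positivity
  set Z : ι → Set (StoneCech X) := fun a => (φ a) ⁻¹' Set.Ici ε' with hZdef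
  have hZcl : ∀ a, IsClosed (Z a) := fun a => isClosed_Ici.preimage (φ a).continuous
  have hZanti : ∀ {a b : ι}, a ≤ b → Z b ⊆ Z a := by
    intro a b hab y hy
    have h1 : ε' ≤ φ b y := hy
    exact le_trans h1 (ContinuousMap.le_def.mp (hant hab) y)
  have hKcpt : IsCompact (⋂ a, Z a) := (isClosed_iInter hZcl).isCompact
  have hdisj : Disjoint (⋂ a, Z a) (Set.range (stoneCechUnit : X → StoneCech X)) := by
    rw [Set.disjoint_right]
    rintro _ ⟨x, rfl⟩ hmem
    obtain ⟨a, ha⟩ := Metric.tendsto_atTop.mp (hconv x) ε' hε'pos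
    have h2 : ε' ≤ φ a (stoneCechUnit x) := Set.mem_iInter.mp hmem a
    have h3 := ha a le_rfl
    rw [Real.dist_eq, sub_zero] at h3
    have h4 := le_abs_self (φ a (stoneCechUnit x))
    linarith
  have hext := hK _ hKcpt hdisj l
  rw [extVal, if_pos hl0] at hext
  set S := {ψ : C(StoneCech X, ℝ) | ∀ y, l * (⋂ a, Z a).indicator 1 y ≤ ψ y} with hSdef
  have hconstmem : ContinuousMap.const (StoneCech X) l ∈ S := by
    intro y
    by_cases hy : y ∈ ⋂ a, Z a
    · simp [Set.indicator_of_mem hy]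
    · simp [Set.indicator_of_notMem hy, hl0]
  have hSne : (μ '' S).Nonempty := ⟨μ (ContinuousMap.const _ l), _, hconstmem, rfl⟩
  have hlt : sInf (μ '' S) < ε' := by rw [hext]; exact hε'pos
  obtain ⟨b, ⟨ψ, hψS, rfl⟩, hψlt⟩ := exists_lt_of_csInf_lt hSne hlt
  have hψ0 : ∀ y, 0 ≤ ψ y := by
    intro y
    refine le_trans ?_ (hψS y)
    have h1 : (0:ℝ) ≤ (⋂ a, Z a).indicator 1 y := Set.indicator_nonneg (fun _ _ => zero_le_one) y
    positivity
  have hψK : ∀ y ∈ ⋂ a, Z a, l ≤ ψ y := by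
    intro y hy
    have h := hψS y
    rwa [Set.indicator_of_mem hy, Pi.one_apply, mul_one] at h
  set F := ψ ⁻¹' Set.Iic M with hFdef
  have hFcpt : IsCompact F := (isClosed_Iic.preimage ψ.continuous).isCompact
  have hFK : (F ∩ ⋂ a, Z a) = ∅ := by
    ext y
    simp only [Set.mem_inter_iff, Set.mem_empty_iff_false, iff_false, not_and]
    intro hyF hyK
    have h1 := hψK y hyK
    have h2 : ψ y ≤ M := hyF
    rw [hldef] at h1
    linarith
  have hdir : Directed (· ⊇ ·) Z := fun a b => ⟨a ⊔ b, hZanti le_sup_left, hZanti le_sup_right⟩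
  obtain ⟨a, ha⟩ := hFcpt.elim_directed_family_closed Z hZcl hFK hdir
  set a1 := a ⊔ a0 with ha1def
  have hlepoint : ∀ y, φ a1 y ≤ ψ y + ε' := by
    intro y
    by_cases hy : ε' ≤ φ a1 y
    · have hyZ1 : y ∈ Z a1 := hy
      have hyZ : y ∈ Z a := hZanti le_sup_left hyZ1
      have hyF : y ∉ F := by
        intro hyF
        have hcontra : y ∈ F ∩ Z a := ⟨hyF, hyZ⟩
        rw [ha] at hcontra
        exact hcontra
      have hψy : M < ψ y := lt_of_not_ge hyF
      have hφy : φ a1 y ≤ M := by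
        calc φ a1 y ≤ φ a0 y := ContinuousMap.le_def.mp (hant le_sup_right) y
        _ ≤ |φ a0 y| := le_abs_self _
        _ ≤ ‖φ a0‖ := (φ a0).norm_coe_le_norm y
      linarith
    · push_neg at hy
      have := hψ0 y
      linarith
  have hle : φ a1 ≤ ψ + ContinuousMap.const _ ε' :=
    ContinuousMap.le_def.mpr fun y => by simpa using hlepoint y
  have hfinal : μ (φ a1) < ε := by
    have h1 : μ (φ a1) ≤ μ (ψ + ContinuousMap.const _ ε') := hop _ _ hle
    rw [hwa, hn, mul_one] at h1
    have h2 : ε' = ε / 2 := hε'def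
    linarith
  refine ⟨a1, fun n hn' => ?_⟩
  rw [Real.dist_eq, sub_zero, abs_of_nonneg (hnonneg n)]
  exact lt_of_le_of_lt (hmono hn') hfinal

/-- If `μ ∈ O(βX)` satisfies `μ(λχ_K) = 0` for every compact `K ⊆ βX \ X` and every real
`λ`, then `μ` is τ-smooth: for every monotone decreasing net of continuous functions on
`βX` converging pointwise to `0` on `X`, `μ(φ_α) → 0` and `μ(−φ_α) → 0`. -/
theorem stmt10 {X : Type*} [TopologicalSpace X] [T35Space X]
    (μ : C(StoneCech X, ℝ) → ℝ)
    (hop : ∀ φ ψ : C(StoneCech X, ℝ), φ ≤ ψ → μ φ ≤ μ ψ)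
    (hwa : ∀ (φ : C(StoneCech X, ℝ)) (c : ℝ),
      μ (φ + ContinuousMap.const (StoneCech X) c) = μ φ + c * μ 1)
    (hn : μ 1 = 1)
    (hK : ∀ K : Set (StoneCech X), IsCompact K →
      Disjoint K (Set.range (stoneCechUnit : X → StoneCech X)) →
      ∀ l : ℝ, extVal μ l K = 0) :
    ∀ (ι : Type) [SemilatticeSup ι] [Nonempty ι] (φ : ι → C(StoneCech X, ℝ)),
      Antitone φ → (∀ x : X, Tendsto (fun a => φ a (stoneCechUnit x)) atTop (𝓝 0)) →
      Tendsto (fun a => μ (φ a)) atTop (𝓝 0) ∧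
        Tendsto (fun a => μ (-(φ a))) atTop (𝓝 0) := by
  intro ι _ _ φ hant hconv
  have h0 : μ 0 = 0 := by
    have h := hwa 1 (-1)
    have he : (1 : C(StoneCech X, ℝ)) + ContinuousMap.const _ (-1) = 0 := by
      ext y; simp
    rw [he, hn] at h
    linarith
  have hμconst : ∀ c : ℝ, μ (ContinuousMap.const (StoneCech X) c) = c := by
    intro c
    have h := hwa 0 c
    have he : (0 : C(StoneCech X, ℝ)) + ContinuousMap.const _ c
        = ContinuousMap.const _ c := by ext y; simp
    rw [he, hn, h0] at h
    linarith
  have hneg1 : (-(1 : C(StoneCech X, ℝ))) = ContinuousMap.const (StoneCech X) (-1) := by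
    ext y; simp
  refine ⟨aux_smooth μ hop hwa hn hK ι φ hant hconv, ?_⟩
  -- dual functional
  set ν : C(StoneCech X, ℝ) → ℝ := fun ψ => -μ (-ψ) with hνdef
  have hn' : ν 1 = 1 := by
    show -μ (-1) = 1
    rw [hneg1, hμconst]
    ring
  have hop' : ∀ φ ψ : C(StoneCech X, ℝ), φ ≤ ψ → ν φ ≤ ν ψ := by
    intro φ1 ψ1 h
    show -μ (-φ1) ≤ -μ (-ψ1)
    have h2 : -ψ1 ≤ -φ1 := neg_le_neg h
    have h3 := hop _ _ h2
    linarith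
  have hwa' : ∀ (ψ : C(StoneCech X, ℝ)) (c : ℝ),
      ν (ψ + ContinuousMap.const (StoneCech X) c) = ν ψ + c * ν 1 := by
    intro ψ c
    rw [hn', mul_one]
    show -μ (-(ψ + ContinuousMap.const (StoneCech X) c)) = -μ (-ψ) + c
    have he : -(ψ + ContinuousMap.const (StoneCech X) c)
        = (-ψ) + ContinuousMap.const (StoneCech X) (-c) := by
      ext y; simp; ring
    rw [he, hwa, hn]
    ring
  have hK' : ∀ K : Set (StoneCech X), IsCompact K →
      Disjoint K (Set.range (stoneCechUnit : X → StoneCech X)) →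
      ∀ l : ℝ, extVal ν l K = 0 := by
    intro K hcpt hdisj l
    rcases le_or_gt 0 l with hl | hl
    · rw [extVal, if_pos hl]
      have himg : ν '' {φ : C(StoneCech X, ℝ) | ∀ y, l * K.indicator 1 y ≤ φ y}
          = (fun a => -(id a)) ''
            (μ '' {φ : C(StoneCech X, ℝ) | ∀ y, φ y ≤ (-l) * K.indicator 1 y}) := by
        ext r
        simp only [Set.mem_image, hνdef, id]
        constructor
        · rintro ⟨φ1, hφ1, rfl⟩
          refine ⟨μ (-φ1), ⟨-φ1, fun y => ?_, rfl⟩, rfl⟩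
          have := hφ1 y
          simp only [ContinuousMap.neg_apply]
          linarith
        · rintro ⟨_, ⟨φ1, hφ1, rfl⟩, rfl⟩
          refine ⟨-φ1, fun y => ?_, by simp⟩
          have := hφ1 y
          simp only [ContinuousMap.neg_apply]
          linarith
      rw [himg, sInf_neg_image, Set.image_id]
      rcases lt_or_eq_of_le hl with hl' | hl'
      · have h := hK K hcpt hdisj (-l)
        rw [extVal, if_neg (by linarith)] at h
        rw [h, neg_zero]
      · -- l = 0
        have hub : ∀ b ∈ μ '' {φ : C(StoneCech X, ℝ) | ∀ y, φ y ≤ (-l) * K.indicator 1 y},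
            b ≤ 0 := by
          rintro _ ⟨φ1, hφ1, rfl⟩
          have h1 : φ1 ≤ 0 := ContinuousMap.le_def.mpr fun y => by
            have := hφ1 y
            simp only [← hl', neg_zero, zero_mul] at this
            simpa using this
          have := hop _ _ h1
          linarith
        have hmem0 : μ (0 : C(StoneCech X, ℝ)) ∈
            μ '' {φ : C(StoneCech X, ℝ) | ∀ y, φ y ≤ (-l) * K.indicator 1 y} := by
          refine ⟨0, fun y => ?_, rfl⟩
          have h1 : (0:ℝ) ≤ (-l) * K.indicator 1 y := by
            rw [← hl']; simp
          simpa using h1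
        have hsup : sSup (μ '' {φ : C(StoneCech X, ℝ) | ∀ y, φ y ≤ (-l) * K.indicator 1 y})
            = 0 := by
          refine le_antisymm (csSup_le ⟨_, hmem0⟩ hub) ?_
          have := le_csSup ⟨0, hub⟩ hmem0
          rwa [h0] at this
        rw [hsup, neg_zero]
    · rw [extVal, if_neg (not_le.mpr hl)]
      have himg : ν '' {φ : C(StoneCech X, ℝ) | ∀ y, φ y ≤ l * K.indicator 1 y}
          = (fun a => -(id a)) ''
            (μ '' {φ : C(StoneCech X, ℝ) | ∀ y, (-l) * K.indicator 1 y ≤ φ y}) := by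
        ext r
        simp only [Set.mem_image, hνdef, id]
        constructor
        · rintro ⟨φ1, hφ1, rfl⟩
          refine ⟨μ (-φ1), ⟨-φ1, fun y => ?_, rfl⟩, rfl⟩
          have := hφ1 y
          simp only [ContinuousMap.neg_apply]
          linarith
        · rintro ⟨_, ⟨φ1, hφ1, rfl⟩, rfl⟩
          refine ⟨-φ1, fun y => ?_, by simp⟩
          have := hφ1 y
          simp only [ContinuousMap.neg_apply]
          linarith
      rw [himg, sSup_neg_image, Set.image_id]
      have h := hK K hcpt hdisj (-l)
      rw [extVal, if_pos (by linarith)] at h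
      rw [h, neg_zero]
  have h2 := aux_smooth ν hop' hwa' hn' hK' ι φ hant hconv
  have h3 := h2.neg
  rw [neg_zero] at h3
  convert h3 using 2 with a
  simp [hνdef]
end

section
/- Let X, Y be Tychonoff spaces and f : X → Y continuous, with Stone–Čech extension βf : βX → βY. If μ ∈ O(βX) is τ-smooth with respect to X, then O(βf)(μ) = (φ ↦ μ(φ ∘ βf)) is τ-smooth with respect to Y; hence O_τ(f) := O(βf)|_{O_τ(X)} maps O_τ(X) into O_τ(Y), and this map is continuous. -/
open Filter Topology

/-! `O(βf)` is the pushforward of functionals along `βf`. Order preservation, weak additivity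
and normalization survive precomposition with any continuous map. For τ-smoothness, a decreasing
net `φ` on `βY` that tends to `0` on `Y` pulls back to the net `φ ∘ βf` on `βX`, which tends to `0`
on `X` because `βf` sends `X` into `Y`. Continuity holds because each coordinate
`μ ↦ μ (φ ∘ βf)` is an evaluation. -/

namespace ContinuousMap

variable {A B : Type*} [TopologicalSpace A] [TopologicalSpace B]

def pushforward (g : C(A, B)) (μ : C(A, ℝ) → ℝ) : C(B, ℝ) → ℝ :=
  fun φ => μ (φ.comp g)

def IsWeaklyAdditive (μ : C(A, ℝ) → ℝ) : Prop :=
  ∀ (φ : C(A, ℝ)) (c : ℝ), μ (φ + const A c) = μ φ + c * μ 1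

def IsTauSmoothAlong {X : Type*} (μ : C(A, ℝ) → ℝ) (e : X → A) : Prop :=
  ∀ (ι : Type) [SemilatticeSup ι] [Nonempty ι] (φ : ι → C(A, ℝ)),
    Antitone φ → (∀ x, Tendsto (fun a => φ a (e x)) atTop (𝓝 0)) →
    Tendsto (fun a => μ (φ a)) atTop (𝓝 0) ∧ Tendsto (fun a => μ (-(φ a))) atTop (𝓝 0)

variable (g : C(A, B)) {μ : C(A, ℝ) → ℝ}

theorem monotone_pushforward (hμ : Monotone μ) : Monotone (pushforward g μ) :=
  fun _ _ h => hμ fun a => h (g a)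

theorem IsWeaklyAdditive.pushforward (hμ : IsWeaklyAdditive μ) :
    IsWeaklyAdditive (pushforward g μ) := by
  intro φ c
  simp only [ContinuousMap.pushforward, add_comp, const_comp, one_comp]
  exact hμ _ c

theorem pushforward_one (hμ : μ 1 = 1) : pushforward g μ 1 = 1 := by
  rw [ContinuousMap.pushforward, one_comp, hμ]

theorem IsTauSmoothAlong.pushforward {X Y : Type*} {e : X → A} {e' : Y → B} {f : X → Y}
    (hμ : IsTauSmoothAlong μ e) (hg : ∀ x, g (e x) = e' (f x)) :
    IsTauSmoothAlong (pushforward g μ) e' := by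
  intro ι _ _ φ hφ hφ0
  have hpull := hμ ι (fun a => (φ a).comp g) (fun _ _ hab a => hφ hab (g a))
    fun x => by simpa only [comp_apply, hg] using hφ0 (f x)
  simpa only [ContinuousMap.pushforward, neg_comp] using hpull

theorem continuous_pushforward : Continuous fun μ : C(A, ℝ) → ℝ => pushforward g μ :=
  continuous_pi fun _ => continuous_apply _

end ContinuousMap

open ContinuousMap in
theorem stmt16_general {X Y : Type*} [TopologicalSpace X]
    [TopologicalSpace Y]
    (f : X → Y) (hf : Continuous f) :
    (∀ μ : C(StoneCech X, ℝ) → ℝ,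
      ((∀ φ ψ : C(StoneCech X, ℝ), φ ≤ ψ → μ φ ≤ μ ψ) ∧
       (∀ (φ : C(StoneCech X, ℝ)) (c : ℝ),
         μ (φ + ContinuousMap.const (StoneCech X) c) = μ φ + c * μ 1) ∧
       μ 1 = 1 ∧
       (∀ (ι : Type) [SemilatticeSup ι] [Nonempty ι] (φ : ι → C(StoneCech X, ℝ)),
         Antitone φ → (∀ x : X, Tendsto (fun a => φ a (stoneCechUnit x)) atTop (𝓝 0)) →
         Tendsto (fun a => μ (φ a)) atTop (𝓝 0) ∧
           Tendsto (fun a => μ (-(φ a))) atTop (𝓝 0))) →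
      (letI ν : C(StoneCech Y, ℝ) → ℝ := fun φ =>
        μ (φ.comp ⟨stoneCechExtend (continuous_stoneCechUnit.comp hf),
          continuous_stoneCechExtend _⟩)
       (∀ φ ψ : C(StoneCech Y, ℝ), φ ≤ ψ → ν φ ≤ ν ψ) ∧
       (∀ (φ : C(StoneCech Y, ℝ)) (c : ℝ),
         ν (φ + ContinuousMap.const (StoneCech Y) c) = ν φ + c * ν 1) ∧
       ν 1 = 1 ∧
       (∀ (ι : Type) [SemilatticeSup ι] [Nonempty ι] (φ : ι → C(StoneCech Y, ℝ)),
         Antitone φ → (∀ y : Y, Tendsto (fun a => φ a (stoneCechUnit y)) atTop (𝓝 0)) →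
         Tendsto (fun a => ν (φ a)) atTop (𝓝 0) ∧
           Tendsto (fun a => ν (-(φ a))) atTop (𝓝 0)))) ∧
    Continuous (fun μ : {μ : C(StoneCech X, ℝ) → ℝ //
        (∀ φ ψ : C(StoneCech X, ℝ), φ ≤ ψ → μ φ ≤ μ ψ) ∧
        (∀ (φ : C(StoneCech X, ℝ)) (c : ℝ),
          μ (φ + ContinuousMap.const (StoneCech X) c) = μ φ + c * μ 1) ∧
        μ 1 = 1 ∧
        (∀ (ι : Type) [SemilatticeSup ι] [Nonempty ι] (φ : ι → C(StoneCech X, ℝ)),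
          Antitone φ → (∀ x : X, Tendsto (fun a => φ a (stoneCechUnit x)) atTop (𝓝 0)) →
          Tendsto (fun a => μ (φ a)) atTop (𝓝 0) ∧
            Tendsto (fun a => μ (-(φ a))) atTop (𝓝 0))} =>
      (fun φ : C(StoneCech Y, ℝ) =>
        μ.1 (φ.comp ⟨stoneCechExtend (continuous_stoneCechUnit.comp hf),
          continuous_stoneCechExtend _⟩))) := by
  set βf : C(StoneCech X, StoneCech Y) :=
    ⟨stoneCechExtend (continuous_stoneCechUnit.comp hf), continuous_stoneCechExtend _⟩
  have hβf : ∀ x, βf (stoneCechUnit x) = stoneCechUnit (f x) :=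
    stoneCechExtend_stoneCechUnit (continuous_stoneCechUnit.comp hf)
  refine ⟨fun μ ⟨hmono, hadd, hnorm, htau⟩ => ?_,
    (continuous_pushforward βf).comp continuous_subtype_val⟩
  exact ⟨monotone_pushforward βf hmono, IsWeaklyAdditive.pushforward βf hadd,
    pushforward_one βf hnorm, IsTauSmoothAlong.pushforward βf htau hβf⟩

/-- If `f : X → Y` is continuous with Stone–Čech extension `βf : βX → βY`, then
`O(βf)` maps τ-smooth functionals in `O(βX)` (w.r.t. `X`) to τ-smooth functionals in
`O(βY)` (w.r.t. `Y`), so `O_τ(f)` maps `O_τ(X)` into `O_τ(Y)`; moreover this map is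
continuous for the pointwise convergence topologies. -/
theorem stmt16 {X Y : Type*} [TopologicalSpace X] [T35Space X]
    [TopologicalSpace Y] [T35Space Y]
    (f : X → Y) (hf : Continuous f) :
    (∀ μ : C(StoneCech X, ℝ) → ℝ,
      ((∀ φ ψ : C(StoneCech X, ℝ), φ ≤ ψ → μ φ ≤ μ ψ) ∧
       (∀ (φ : C(StoneCech X, ℝ)) (c : ℝ),
         μ (φ + ContinuousMap.const (StoneCech X) c) = μ φ + c * μ 1) ∧
       μ 1 = 1 ∧
       (∀ (ι : Type) [SemilatticeSup ι] [Nonempty ι] (φ : ι → C(StoneCech X, ℝ)),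
         Antitone φ → (∀ x : X, Tendsto (fun a => φ a (stoneCechUnit x)) atTop (𝓝 0)) →
         Tendsto (fun a => μ (φ a)) atTop (𝓝 0) ∧
           Tendsto (fun a => μ (-(φ a))) atTop (𝓝 0))) →
      (letI ν : C(StoneCech Y, ℝ) → ℝ := fun φ =>
        μ (φ.comp ⟨stoneCechExtend (continuous_stoneCechUnit.comp hf),
          continuous_stoneCechExtend _⟩)
       (∀ φ ψ : C(StoneCech Y, ℝ), φ ≤ ψ → ν φ ≤ ν ψ) ∧
       (∀ (φ : C(StoneCech Y, ℝ)) (c : ℝ),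
         ν (φ + ContinuousMap.const (StoneCech Y) c) = ν φ + c * ν 1) ∧
       ν 1 = 1 ∧
       (∀ (ι : Type) [SemilatticeSup ι] [Nonempty ι] (φ : ι → C(StoneCech Y, ℝ)),
         Antitone φ → (∀ y : Y, Tendsto (fun a => φ a (stoneCechUnit y)) atTop (𝓝 0)) →
         Tendsto (fun a => ν (φ a)) atTop (𝓝 0) ∧
           Tendsto (fun a => ν (-(φ a))) atTop (𝓝 0)))) ∧
    Continuous (fun μ : {μ : C(StoneCech X, ℝ) → ℝ //
        (∀ φ ψ : C(StoneCech X, ℝ), φ ≤ ψ → μ φ ≤ μ ψ) ∧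
        (∀ (φ : C(StoneCech X, ℝ)) (c : ℝ),
          μ (φ + ContinuousMap.const (StoneCech X) c) = μ φ + c * μ 1) ∧
        μ 1 = 1 ∧
        (∀ (ι : Type) [SemilatticeSup ι] [Nonempty ι] (φ : ι → C(StoneCech X, ℝ)),
          Antitone φ → (∀ x : X, Tendsto (fun a => φ a (stoneCechUnit x)) atTop (𝓝 0)) →
          Tendsto (fun a => μ (φ a)) atTop (𝓝 0) ∧
            Tendsto (fun a => μ (-(φ a))) atTop (𝓝 0))} =>
      (fun φ : C(StoneCech Y, ℝ) =>
        μ.1 (φ.comp ⟨stoneCechExtend (continuous_stoneCechUnit.comp hf),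
          continuous_stoneCechExtend _⟩))) :=
  stmt16_general f hf
end
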